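/- arXiv:1604.03228 — 3 statements merged into one kernel-verified Lean document; each statement's English description precedes it below -/
import Mathlib

section
/- Let (X, d) be a metric space, V a finite subset of X, k ≥ 1 an integer, and r ≥ 0. Suppose there exists a set C* ⊆ V with |C*| ≤ k such that C* covers V within radius r. Then for every nonempty subset S ⊆ V and every farthest-point greedy sequence c_1, …, c_k of length k on S, every point of S is within distance 2r of the set {c_1, …, c_k}. (That is, Gonzalez's greedy algorithm run on any subset S of V returns a solution whose covering radius for S is at most twice the optimal k-center value of V.) -/
open Metric

/-- `c : Fin k → X` is a farthest-point greedy sequence of length `k` on the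
finite set `S`: each `c i` lies in `S`, and for `i ≥ 1` (0-indexed), every
point of `S` is no farther from the previously chosen centers
`{c j : j < i}` than `c i` is. -/
def IsGreedySeq {X : Type*} [MetricSpace X] (S : Finset X) (k : ℕ)
    (c : Fin k → X) : Prop :=
  (∀ i, c i ∈ S) ∧
  ∀ i : Fin k, 0 < (i : ℕ) → ∀ s ∈ S,
    infDist s (c '' {j | j < i}) ≤ infDist (c i) (c '' {j | j < i})

/-- Gonzalez's greedy algorithm run on any subset `S` of `V` returns a
solution whose covering radius for `S` is at most twice the optimal
`k`-center value of `V`. -/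
theorem gonzalez_on_subset_two_approx {X : Type*} [MetricSpace X]
    (V : Finset X) (k : ℕ) (hk : 1 ≤ k) (r : ℝ) (hr : 0 ≤ r)
    (Cstar : Finset X) (hCsub : Cstar ⊆ V) (hCcard : Cstar.card ≤ k)
    (hcov : ∀ v ∈ V, ∃ c ∈ Cstar, dist v c ≤ r)
    (S : Finset X) (hS : S ⊆ V) (hSne : S.Nonempty)
    (c : Fin k → X) (hgreedy : IsGreedySeq S k c) :
    ∀ s ∈ S, ∃ i : Fin k, dist s (c i) ≤ 2 * r := by
  obtain ⟨hmem, hfar⟩ := hgreedy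
  intro s hs
  -- the k+1 points: the greedy centers and s
  set p : Fin (k+1) → X := fun i => if h : (i : ℕ) < k then c ⟨i, h⟩ else s with hp
  have hpV : ∀ i, p i ∈ V := by
    intro i
    simp only [hp]
    split
    · exact hS (hmem _)
    · exact hS hs
  have hcov' : ∀ i : Fin (k+1), ∃ cc, cc ∈ Cstar ∧ dist (p i) cc ≤ r := by
    intro i
    obtain ⟨cc, h1, h2⟩ := hcov (p i) (hpV i)
    exact ⟨cc, h1, h2⟩
  choose f hfC hfd using hcov'
  have hcard : Cstar.card < (Finset.univ : Finset (Fin (k+1))).card := by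
    simpa using Nat.lt_succ_of_le hCcard
  obtain ⟨i, -, j, -, hij, hfij⟩ :=
    Finset.exists_ne_map_eq_of_card_lt_of_maps_to hcard (fun i _ => hfC i)
  have hd : dist (p i) (p j) ≤ 2 * r := by
    calc dist (p i) (p j) ≤ dist (p i) (f i) + dist (f i) (p j) := dist_triangle _ _ _
      _ = dist (p i) (f i) + dist (p j) (f j) := by rw [hfij, dist_comm (f j) (p j)]
      _ ≤ r + r := add_le_add (hfd i) (hfd j)
      _ = 2 * r := by ring
  -- key claim, for ordered pairs
  have key : ∀ a b : Fin (k+1), (a : ℕ) < (b : ℕ) → dist (p a) (p b) ≤ 2 * r →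
      ∃ i : Fin k, dist s (c i) ≤ 2 * r := by
    intro a b hab hdab
    have hak : (a : ℕ) < k := lt_of_lt_of_le hab (Nat.lt_succ_iff.mp b.isLt)
    have hpa : p a = c ⟨a, hak⟩ := dif_pos hak
    by_cases hbk : (b : ℕ) < k
    · -- both are greedy centers: use the greedy property
      have hpb : p b = c ⟨b, hbk⟩ := dif_pos hbk
      set a' : Fin k := ⟨a, hak⟩
      set b' : Fin k := ⟨b, hbk⟩
      have ha'b' : a' < b' := hab
      set A : Set X := c '' {l | l < b'} with hA
      have hca : c a' ∈ A := ⟨a', ha'b', rfl⟩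
      have hfin : IsCompact A := Set.Finite.isCompact (Set.toFinite A)
      have h1 : infDist (c b') A ≤ 2 * r := by
        refine le_trans (infDist_le_dist_of_mem hca) ?_
        rw [dist_comm]
        rw [hpa, hpb] at hdab
        exact hdab
      have h2 : infDist s A ≤ 2 * r :=
        le_trans (hfar b' (lt_of_le_of_lt (Nat.zero_le _) hab) s hs) h1
      obtain ⟨y, hyA, hy⟩ := hfin.exists_infDist_eq_dist ⟨_, hca⟩ s
      obtain ⟨l, -, rfl⟩ := hyA
      exact ⟨l, by rw [← hy]; exact h2⟩
    · -- b is the extra point s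
      have hpb : p b = s := dif_neg hbk
      refine ⟨⟨a, hak⟩, ?_⟩
      rw [← hpa, dist_comm, ← hpb]
      exact hdab
  have hij' : (i : ℕ) ≠ (j : ℕ) := fun h => hij (Fin.ext h)
  rcases hij'.lt_or_gt with h | h
  · exact key i j h hd
  · exact key j i h (by rwa [dist_comm])
end

section
/- Let (X, d) be a metric space, S a nonempty finite subset of X, k ≥ 2 an integer, c_1, …, c_k a farthest-point greedy sequence of length k on S, and D ≥ 0. If for some index j with 2 ≤ j ≤ k the greedy gain satisfies d(c_j, {c_1, …, c_{j−1}}) ≤ D, then every point of S is within distance D of the set {c_1, …, c_k}. (In particular, if two of the greedy centers are within distance D of each other, then all points of S are within D of the chosen centers.) -/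
open Metric

theorem Metric.exists_dist_eq_infDist_image_of_finite {ι X : Type*} [MetricSpace X]
    [Finite ι] (f : ι → X) {A : Set ι} (hA : A.Nonempty) (x : X) :
    ∃ i ∈ A, dist x (f i) = infDist x (f '' A) := by
  obtain ⟨_, ⟨i, hi, rfl⟩, hdist⟩ :=
    ((Set.toFinite A).image f).isCompact.exists_infDist_eq_dist (hA.image f) x
  exact ⟨i, hi, hdist.symm⟩

theorem Fin.setOf_lt_nonempty {k : ℕ} {j : Fin k} (hj : 0 < (j : ℕ)) :
    {l : Fin k | l < j}.Nonempty :=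
  ⟨⟨0, hj.trans j.isLt⟩, Fin.lt_def.mpr hj⟩

/-- Centers are 0-indexed, so `j` with `1 ≤ j` is a 1-indexed step between `2` and `k`. -/
theorem greedy_gain_bounds_radius_general {X : Type*} [MetricSpace X]
    (S : Finset X) (k : ℕ)
    (c : Fin k → X) (hgreedy : IsGreedySeq S k c) (D : ℝ)
    (j : Fin k) (hj : 1 ≤ (j : ℕ))
    (hgain : infDist (c j) (c '' {l | l < j}) ≤ D) :
    ∀ s ∈ S, ∃ i : Fin k, dist s (c i) ≤ D := by
  intro s hs
  obtain ⟨i, -, hi⟩ := exists_dist_eq_infDist_image_of_finite c (Fin.setOf_lt_nonempty hj) s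
  exact ⟨i, hi ▸ (hgreedy.2 j hj s hs).trans hgain⟩

/-- If at some step the greedy gain of a farthest-point greedy sequence is at
most `D`, then every point of `S` is within distance `D` of the chosen
centers.  (Centers are 0-indexed, so `j` with `1 ≤ j` corresponds to a
1-indexed step between `2` and `k`.) -/
theorem greedy_gain_bounds_radius {X : Type*} [MetricSpace X]
    (S : Finset X) (hSne : S.Nonempty) (k : ℕ) (hk : 2 ≤ k)
    (c : Fin k → X) (hgreedy : IsGreedySeq S k c) (D : ℝ) (hD : 0 ≤ D)
    (j : Fin k) (hj : 1 ≤ (j : ℕ))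
    (hgain : infDist (c j) (c '' {l | l < j}) ≤ D) :
    ∀ s ∈ S, ∃ i : Fin k, dist s (c i) ≤ D :=
  greedy_gain_bounds_radius_general S k c hgreedy D j hj hgain
end

section
/- Let (X, d) be a metric space, V a finite subset of X, k ≥ 1 an integer, and r ≥ 0, and suppose there exists C* ⊆ V with |C*| ≤ k that covers V within radius r. Let V_1, …, V_m be nonempty sets whose union is V, and for each i let C_i be the set of points of a farthest-point greedy sequence of length k on V_i. Let C = C_1 ∪ ⋯ ∪ C_m, and let c_1, …, c_k be a farthest-point greedy sequence of length k on C. Then every point of V is within distance 4r of the set {c_1, …, c_k}. (That is, the two-round MapReduce algorithm that runs Gonzalez's algorithm on each part and then on the union of the resulting centers is a 4-approximation for k-center.) -/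
/-! Let `δ` be the distance from a point `s ∈ S` to the `k` greedy centers. By the greedy choice,
the `k + 1` points `c 0, …, c (k - 1), s` are pairwise at distance at least `δ`; as they are covered
by at most `k` balls of radius `r`, two of them lie in the same ball, so `δ ≤ 2 r`. This makes
Gonzalez's algorithm a 2-approximation on every part `V i` and again on the union `C` of the
centers found there; chaining the two bounds gives `4 r`. -/

open Metric

section

variable {X : Type*} [MetricSpace X]

theorem exists_ne_dist_le_two_mul_of_card_lt {ι : Type*} [Fintype ι] {Cstar : Finset X}
    {r : ℝ} (hcard : Cstar.card < Fintype.card ι) (p : ι → X)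
    (hcov : ∀ a, ∃ y ∈ Cstar, dist (p a) y ≤ r) :
    ∃ a b, a ≠ b ∧ dist (p a) (p b) ≤ 2 * r := by
  choose F hF hdist using hcov
  obtain ⟨a, b, hne, hab⟩ := Fintype.exists_ne_map_eq_of_card_lt
    (fun a => (⟨F a, hF a⟩ : Cstar)) (by simpa using hcard)
  have hFab : F a = F b := congrArg Subtype.val hab
  refine ⟨a, b, hne, ?_⟩
  calc dist (p a) (p b) ≤ dist (p a) (F a) + dist (p b) (F a) := dist_triangle_right _ _ _
    _ ≤ r + r := add_le_add (hdist a) (hFab ▸ hdist b)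
    _ = 2 * r := by ring

namespace IsGreedySeq

variable {S : Finset X} {k : ℕ} {c : Fin k → X}

theorem infDist_range_le_dist (hg : IsGreedySeq S k c) {s : X} (hs : s ∈ S) {i j : Fin k}
    (hij : i < j) : infDist s (Set.range c) ≤ dist (c i) (c j) := by
  have hmem : c i ∈ c '' {l | l < j} := ⟨i, hij, rfl⟩
  calc infDist s (Set.range c)
      ≤ infDist s (c '' {l | l < j}) :=
        infDist_le_infDist_of_subset (Set.image_subset_range _ _) ⟨_, hmem⟩
    _ ≤ infDist (c j) (c '' {l | l < j}) := hg.2 j ((Nat.zero_le _).trans_lt hij) s hs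
    _ ≤ dist (c j) (c i) := infDist_le_dist_of_mem hmem
    _ = dist (c i) (c j) := dist_comm _ _

/-- `none` stands for the point `s` itself, `some i` for the center `c i`. -/
theorem infDist_range_le_dist_option (hg : IsGreedySeq S k c) {s : X} (hs : s ∈ S)
    {a b : Option (Fin k)} (hab : a ≠ b) :
    infDist s (Set.range c) ≤ dist (a.elim s c) (b.elim s c) := by
  rcases a with _ | i <;> rcases b with _ | j
  · exact absurd rfl hab
  · exact infDist_le_dist_of_mem (Set.mem_range_self j)
  · exact dist_comm s (c i) ▸ infDist_le_dist_of_mem (Set.mem_range_self i)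
  · rcases lt_or_gt_of_ne fun h => hab (congrArg some h) with h | h
    · exact hg.infDist_range_le_dist hs h
    · exact dist_comm (c j) (c i) ▸ hg.infDist_range_le_dist hs h

theorem exists_dist_le_two_mul (hg : IsGreedySeq S k c) {Cstar : Finset X}
    (hcard : Cstar.card ≤ k) {r : ℝ} (hcov : ∀ v ∈ S, ∃ y ∈ Cstar, dist v y ≤ r) {s : X}
    (hs : s ∈ S) : ∃ i, dist s (c i) ≤ 2 * r := by
  have : Nonempty (Fin k) := by
    obtain ⟨y, hy, -⟩ := hcov s hs
    exact ⟨⟨0, (Finset.card_pos.2 ⟨y, hy⟩).trans_le hcard⟩⟩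
  obtain ⟨_, ⟨i, rfl⟩, hi⟩ :=
    (Set.finite_range c).isCompact.exists_infDist_eq_dist (Set.range_nonempty c) s
  obtain ⟨a, b, hab, hdist⟩ := exists_ne_dist_le_two_mul_of_card_lt
    (by simpa using Nat.lt_succ_of_le hcard) (fun a : Option (Fin k) => a.elim s c)
    fun a => hcov _ (by cases a <;> simp [hs, hg.1])
  exact ⟨i, hi ▸ (hg.infDist_range_le_dist_option hs hab).trans hdist⟩

end IsGreedySeq

end

theorem two_round_mapreduce_four_approx_general {X : Type*} [MetricSpace X]
    [DecidableEq X] (V : Finset X) (k : ℕ) (r : ℝ)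
    (Cstar : Finset X) (hCcard : Cstar.card ≤ k)
    (hcov : ∀ v ∈ V, ∃ cs ∈ Cstar, dist v cs ≤ r)
    (m : ℕ) (Vs : Fin m → Finset X)
    (hunion : ∀ v, v ∈ V ↔ ∃ i, v ∈ Vs i)
    (cseq : ∀ i : Fin m, Fin k → X)
    (hcseq : ∀ i, IsGreedySeq (Vs i) k (cseq i))
    (C : Finset X)
    (hC : C = Finset.image (fun p : Fin m × Fin k => cseq p.1 p.2) Finset.univ)
    (c : Fin k → X) (hgreedy : IsGreedySeq C k c) :
    ∀ v ∈ V, ∃ i : Fin k, dist v (c i) ≤ 4 * r := by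
  intro v hv
  obtain ⟨i, hvi⟩ := (hunion v).1 hv
  have hcseq_mem : ∀ a b, cseq a b ∈ C := fun a b =>
    hC ▸ Finset.mem_image_of_mem _ (Finset.mem_univ (a, b))
  have hCV : ∀ w ∈ C, w ∈ V := by
    intro w hw
    obtain ⟨⟨a, b⟩, -, rfl⟩ := Finset.mem_image.1 (hC ▸ hw)
    exact (hunion _).2 ⟨a, (hcseq a).1 b⟩
  obtain ⟨j, hj⟩ := (hcseq i).exists_dist_le_two_mul hCcard
    (fun w hw => hcov w ((hunion w).2 ⟨i, hw⟩)) hvi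
  obtain ⟨l, hl⟩ := hgreedy.exists_dist_le_two_mul hCcard (fun w hw => hcov w (hCV w hw))
    (hcseq_mem i j)
  refine ⟨l, ?_⟩
  calc dist v (c l) ≤ dist v (cseq i j) + dist (cseq i j) (c l) := dist_triangle _ _ _
    _ ≤ 2 * r + 2 * r := add_le_add hj hl
    _ = 4 * r := by ring

/-- The two-round MapReduce algorithm that runs Gonzalez's greedy algorithm
on each part `V i` of a decomposition of `V`, collects the resulting centers
into `C`, and then runs Gonzalez's algorithm on `C`, is a 4-approximation
for `k`-center. -/
theorem two_round_mapreduce_four_approx {X : Type*} [MetricSpace X]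
    [DecidableEq X] (V : Finset X) (k : ℕ) (hk : 1 ≤ k) (r : ℝ) (hr : 0 ≤ r)
    (Cstar : Finset X) (hCsub : Cstar ⊆ V) (hCcard : Cstar.card ≤ k)
    (hcov : ∀ v ∈ V, ∃ cs ∈ Cstar, dist v cs ≤ r)
    (m : ℕ) (Vs : Fin m → Finset X) (hVne : ∀ i, (Vs i).Nonempty)
    (hunion : ∀ v, v ∈ V ↔ ∃ i, v ∈ Vs i)
    (cseq : ∀ i : Fin m, Fin k → X)
    (hcseq : ∀ i, IsGreedySeq (Vs i) k (cseq i))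
    (C : Finset X)
    (hC : C = Finset.image (fun p : Fin m × Fin k => cseq p.1 p.2) Finset.univ)
    (c : Fin k → X) (hgreedy : IsGreedySeq C k c) :
    ∀ v ∈ V, ∃ i : Fin k, dist v (c i) ≤ 4 * r :=
  two_round_mapreduce_four_approx_general V k r Cstar hCcard hcov m Vs hunion cseq hcseq C hC c
    hgreedy
end
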